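/- arXiv:0812.2899 — 4 statements merged into one kernel-verified Lean document; each statement's English description precedes it below -/
import Mathlib

section
/- Let f : X → Y be a perfect surjection between metric spaces, d a metric on X, m ≥ 1, and for y ∈ Y let 𝓑_f(m,y) be the set of continuous g : X → M (M a metric space) such that for every z ∈ M and any two continua K₀, K₁ ⊆ f⁻¹(y) ∩ g⁻¹(z) with K₀ ∩ K₁ ≠ ∅, either K₀ ⊆ B(K₁, 1/m) or K₁ ⊆ B(K₀, 1/m). Then a continuous map g : X → M restricts to a Bing map on f⁻¹(y) for every y in a closed set H ⊆ Y if and only if g ∈ 𝓑_f(m,y) for all m ≥ 1 and all y ∈ H. -/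
/-! Two intersecting subcontinua `K₀, K₁` form a continuum `K₀ ∪ K₁`, which is indecomposable
exactly when `K₀` and `K₁` are nested; conversely the two pieces of any decomposition of a
continuum intersect. So a set is Bing iff any two of its intersecting subcontinua are nested.
For closed sets, nesting is the limit `m → ∞` of the `1/m`-approximate nesting in `𝓑_f(m,y)`:
a point of `K₀ \ K₁` escapes the `1/m`-thickening of `K₁` for all large `m`. -/

open Set Metric Topology Filter

/-- Covering dimension ≤ 0: every open cover has a pairwise disjoint open refinement. -/
def DimLE0 (X : Type*) [TopologicalSpace X] : Prop :=
  ∀ 𝒰 : Set (Set X), (∀ U ∈ 𝒰, IsOpen U) → ⋃₀ 𝒰 = Set.univ →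
    ∃ 𝒱 : Set (Set X), (∀ V ∈ 𝒱, IsOpen V) ∧ ⋃₀ 𝒱 = Set.univ ∧
      𝒱.PairwiseDisjoint id ∧ ∀ V ∈ 𝒱, ∃ U ∈ 𝒰, V ⊆ U

/-- A continuum `K` is indecomposable if it is not the union of two proper subcontinua. -/
def IsIndecomposable {X : Type*} [TopologicalSpace X] (K : Set X) : Prop :=
  ∀ A B : Set X, A ⊆ K → B ⊆ K → IsCompact A → IsConnected A →
    IsCompact B → IsConnected B → A ∪ B = K → A = K ∨ B = K

/-- A set is a Bing space if all of its subcontinua are indecomposable. -/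
def IsBing {X : Type*} [TopologicalSpace X] (Z : Set X) : Prop :=
  ∀ K : Set X, K ⊆ Z → IsCompact K → IsConnected K → IsIndecomposable K

/-- `g ∈ 𝓑_f(m,y)`: for every `z ∈ M` and any two continua `K₀, K₁ ⊆ f⁻¹(y) ∩ g⁻¹(z)`
with a common point, either `K₀ ⊆ B(K₁,1/m)` or `K₁ ⊆ B(K₀,1/m)`. -/
def MemBf {X Y M : Type*} [MetricSpace X] [MetricSpace Y] [MetricSpace M]
    (f : X → Y) (m : ℕ) (y : Y) (g : X → M) : Prop :=
  ∀ z : M, ∀ K₀ K₁ : Set X,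
    K₀ ⊆ f ⁻¹' {y} ∩ g ⁻¹' {z} → K₁ ⊆ f ⁻¹' {y} ∩ g ⁻¹' {z} →
    IsCompact K₀ → IsConnected K₀ → IsCompact K₁ → IsConnected K₁ →
    (K₀ ∩ K₁).Nonempty →
    K₀ ⊆ Metric.thickening (1 / (m : ℝ)) K₁ ∨ K₁ ⊆ Metric.thickening (1 / (m : ℝ)) K₀

/-- `g` restricts to a Bing map on `f⁻¹(y)`: every fiber of the restriction is a Bing space. -/
def BingOnFiber {X Y M : Type*} [MetricSpace X] [MetricSpace Y] [MetricSpace M]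
    (f : X → Y) (g : X → M) (y : Y) : Prop :=
  ∀ z : M, IsBing (f ⁻¹' {y} ∩ g ⁻¹' {z})

theorem isBing_iff_subset_or_subset {X : Type*} [TopologicalSpace X] [T2Space X] {Z : Set X} :
    IsBing Z ↔ ∀ K₀ K₁ : Set X, K₀ ⊆ Z → K₁ ⊆ Z → IsCompact K₀ → IsConnected K₀ →
      IsCompact K₁ → IsConnected K₁ → (K₀ ∩ K₁).Nonempty → K₀ ⊆ K₁ ∨ K₁ ⊆ K₀ := by
  constructor
  · intro hZ K₀ K₁ h₀ h₁ hc₀ hk₀ hc₁ hk₁ hne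
    have hdec := hZ (K₀ ∪ K₁) (union_subset h₀ h₁) (hc₀.union hc₁) (hk₀.union hne hk₁) K₀ K₁
      subset_union_left subset_union_right hc₀ hk₀ hc₁ hk₁ rfl
    exact hdec.symm.imp (fun h => union_eq_right.1 h.symm) (fun h => union_eq_left.1 h.symm)
  · intro hZ K hKZ _ hK A B hAK hBK hAc hA hBc hB hAB
    obtain ⟨a, ha⟩ := hA.nonempty
    obtain ⟨b, hb⟩ := hB.nonempty
    obtain ⟨x, -, hx⟩ := isPreconnected_closed_iff.1 hK.isPreconnected A B hAc.isClosed
      hBc.isClosed hAB.ge ⟨a, hAK ha, ha⟩ ⟨b, hBK hb, hb⟩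
    refine (hZ A B (hAK.trans hKZ) (hBK.trans hKZ) hAc hA hBc hB ⟨x, hx⟩).symm.imp ?_ ?_
    · intro hBA; rw [← hAB, union_eq_left.2 hBA]
    · intro hAsubB; rw [← hAB, union_eq_right.2 hAsubB]

section Thickening

variable {X : Type*} [PseudoMetricSpace X]

theorem eventually_notMem_thickening_one_div {B : Set X} (hB : IsClosed B) {x : X}
    (hx : x ∉ B) : ∀ᶠ m : ℕ in atTop, x ∉ thickening (1 / (m : ℝ)) B := by
  rw [← hB.closure_eq, closure_eq_iInter_thickening] at hx
  simp only [mem_iInter, not_forall] at hx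
  obtain ⟨δ, hδ, hxδ⟩ := hx
  filter_upwards [tendsto_one_div_atTop_nhds_zero_nat.eventually (gt_mem_nhds hδ)] with m hm
  exact fun h => hxδ (thickening_mono hm.le B h)

theorem subset_or_subset_of_forall_subset_thickening {A B : Set X} (hA : IsClosed A)
    (hB : IsClosed B)
    (h : ∀ m : ℕ, 1 ≤ m → A ⊆ thickening (1 / (m : ℝ)) B ∨ B ⊆ thickening (1 / (m : ℝ)) A) :
    A ⊆ B ∨ B ⊆ A := by
  by_contra! hAB
  obtain ⟨⟨a, ha, haB⟩, ⟨b, hb, hbA⟩⟩ := And.intro (not_subset.1 hAB.1) (not_subset.1 hAB.2)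
  obtain ⟨m, hm, haB', hbA'⟩ := ((eventually_ge_atTop 1).and
    ((eventually_notMem_thickening_one_div hB haB).and
      (eventually_notMem_thickening_one_div hA hbA))).exists
  rcases h m hm with h | h
  · exact haB' (h ha)
  · exact hbA' (h hb)

end Thickening

theorem bing_iff_memBf_general {X Y M : Type*} [MetricSpace X] [MetricSpace Y] [MetricSpace M]
    (f : X → Y) (H : Set Y) (g : X → M) :
    (∀ y ∈ H, BingOnFiber f g y) ↔ ∀ m : ℕ, 1 ≤ m → ∀ y ∈ H, MemBf f m y g := by
  simp only [BingOnFiber, isBing_iff_subset_or_subset]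
  constructor
  · intro hbing m hm y hy z K₀ K₁ h₀ h₁ hc₀ hk₀ hc₁ hk₁ hne
    have hpos : 0 < 1 / (m : ℝ) := one_div_pos.2 (by exact_mod_cast hm)
    exact (hbing y hy z K₀ K₁ h₀ h₁ hc₀ hk₀ hc₁ hk₁ hne).imp
      (fun h => h.trans (self_subset_thickening hpos K₁))
      (fun h => h.trans (self_subset_thickening hpos K₀))
  · intro hmem y hy z K₀ K₁ h₀ h₁ hc₀ hk₀ hc₁ hk₁ hne
    exact subset_or_subset_of_forall_subset_thickening hc₀.isClosed hc₁.isClosed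
      fun m hm => hmem m hm y hy z K₀ K₁ h₀ h₁ hc₀ hk₀ hc₁ hk₁ hne

/-- Lemma 3.1 of the paper: `𝓑_f(H) = ⋂_{m≥1} 𝓑_f(m,H)`. -/
theorem bing_iff_memBf {X Y M : Type*} [MetricSpace X] [MetricSpace Y] [MetricSpace M]
    (f : X → Y) (hf : Continuous f) (hcl : IsClosedMap f)
    (hsurj : Function.Surjective f) (hfib : ∀ y, IsCompact (f ⁻¹' {y}))
    (H : Set Y) (hH : IsClosed H) (g : X → M) (hg : Continuous g) :
    (∀ y ∈ H, BingOnFiber f g y) ↔ ∀ m : ℕ, 1 ≤ m → ∀ y ∈ H, MemBf f m y g :=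
  bing_iff_memBf_general f H g
end

section
/- Let f : X → Y be a perfect surjection between compact metric spaces, m ≥ 1, y ∈ Y, and suppose the continuous map g : X → (M,ρ) belongs to 𝓑_f(m,y). Then there exist a neighborhood V of y in Y and δ > 0 such that for every y' ∈ V and every continuous g' : X → M with ρ(g'(x), g(x)) < δ for all x ∈ f⁻¹(y'), one has g' ∈ 𝓑_f(m,y'). -/
/-!
Call a pair `(K₀, K₁)` of subcontinua an `ε`-witness against `g ∈ 𝓑_f(m,y)` if the two continua
meet, are not `1/m`-close to one another, lie over the closed ball of radius `ε` around `y`, and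
`g` varies by at most `ε` between them. In the hyperspace `NonemptyCompacts X × NonemptyCompacts X`,
compact because `X` is, each of these conditions is closed, so the `ε`-witnesses form closed sets
decreasing, as `ε ↓ 0`, to the exact witnesses, of which there are none when `g ∈ 𝓑_f(m,y)`. By
compactness there are then no `ε`-witnesses for some `ε > 0`, while any witness against
`g' ∈ 𝓑_f(m,y')` with `dist y' y ≤ ε` and `g'` uniformly `ε/2`-close to `g` over `f⁻¹(y')` is one.
-/

open Set Metric Topology Filter

namespace TopologicalSpace.NonemptyCompacts

theorem isOpen_setOf_forall_mem {X Z : Type*} [TopologicalSpace X] [TopologicalSpace Z]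
    {U : Set (X × Z)} (hU : IsOpen U) :
    IsOpen {P : NonemptyCompacts X × Z | ∀ x ∈ (P.1 : Set X), (x, P.2) ∈ U} := by
  rw [isOpen_iff_forall_mem_open]
  rintro ⟨K, z⟩ hK
  obtain ⟨u, v, hu, hv, hKu, hzv, huv⟩ := generalized_tube_lemma K.isCompact isCompact_singleton
    hU (by rintro ⟨x, _⟩ ⟨hx, rfl⟩; exact hK x hx)
  refine ⟨{K' : NonemptyCompacts X | (K' : Set X) ⊆ u} ×ˢ v, ?_,
    (isOpen_subsets_of_isOpen hu).prod hv, hKu, hzv rfl⟩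
  rintro ⟨K', z'⟩ ⟨hK', hz'⟩ x hx
  exact huv ⟨hK' hx, hz'⟩

theorem isClosed_setOf_isPreconnected {X : Type*} [TopologicalSpace X] [T2Space X] :
    IsClosed {K : NonemptyCompacts X | IsPreconnected (K : Set X)} := by
  rw [← isOpen_compl_iff, isOpen_iff_forall_mem_open]
  intro K hK
  simp only [mem_compl_iff, mem_ofPred_eq, IsPreconnected, not_forall] at hK
  obtain ⟨u, v, hu, hv, hKuv, ⟨a, haK, hau⟩, ⟨b, hbK, hbv⟩, huv⟩ := hK
  have huv' : ∀ x ∈ (K : Set X), x ∈ u → x ∉ v := fun x hxK hxu hxv => huv ⟨x, hxK, hxu, hxv⟩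
  -- `u` and `v` need not be disjoint off `K`; disjoint open sets around the pieces `K \ v` and
  -- `K \ u` disconnect every compact set close to `K` as well.
  obtain ⟨U, V, hU, hV, hKU, hKV, hUV⟩ := SeparatedNhds.of_isCompact_isCompact
    (K.isCompact.diff hv) (K.isCompact.diff hu)
    (disjoint_left.2 fun x ⟨hxK, hxv⟩ ⟨_, hxu⟩ => (hKuv hxK).elim hxu hxv)
  refine ⟨{K' | (K' : Set X) ⊆ U ∪ V} ∩ {K' | ((K' : Set X) ∩ U).Nonempty} ∩
      {K' | ((K' : Set X) ∩ V).Nonempty}, ?_, ?_, ?_⟩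
  · rintro K' ⟨⟨hK'UV, hK'U⟩, hK'V⟩ hK'
    obtain ⟨x, -, hxU, hxV⟩ := hK' U V hU hV hK'UV hK'U hK'V
    exact disjoint_left.1 hUV hxU hxV
  · exact ((isOpen_subsets_of_isOpen (hU.union hV)).inter
      (isOpen_inter_nonempty_of_isOpen hU)).inter (isOpen_inter_nonempty_of_isOpen hV)
  · refine ⟨⟨fun x hx => ?_, ⟨a, haK, hKU ⟨haK, huv' a haK hau⟩⟩⟩,
      ⟨b, hbK, hKV ⟨hbK, fun hbu => huv' b hbK hbu hbv⟩⟩⟩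
    by_cases hxv : x ∈ v
    · exact Or.inr (hKV ⟨hx, fun hxu => huv' x hx hxu hxv⟩)
    · exact Or.inl (hKU ⟨hx, hxv⟩)

theorem isOpen_setOf_subset_thickening {X : Type*} [MetricSpace X] (r : ℝ) :
    IsOpen {P : NonemptyCompacts X × NonemptyCompacts X | (P.1 : Set X) ⊆ thickening r P.2} := by
  have hU : IsOpen {q : X × NonemptyCompacts X | infDist q.1 q.2 < r} :=
    isOpen_lt lipschitz_infDist.continuous continuous_const
  convert isOpen_setOf_forall_mem hU using 1
  ext P
  simp [subset_def, mem_thickening_iff_infDist_lt P.2.nonempty]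

end TopologicalSpace.NonemptyCompacts

open TopologicalSpace

theorem CompactSpace.exists_pos_eq_empty_of_iInter_eq_empty {Z : Type*} [TopologicalSpace Z]
    [CompactSpace Z] {S : ℝ → Set Z} (hS : Monotone S) (hcl : ∀ ε, IsClosed (S ε))
    (h : ⋂ ε > 0, S ε = ∅) : ∃ ε > 0, S ε = ∅ := by
  obtain ⟨⟨ε, hε⟩, hSε⟩ := isCompact_univ.elim_directed_family_closed
    (fun ε : Ioi (0 : ℝ) => S ε) (fun ε => hcl ε) (by simpa [iInter_subtype] using h)
    fun a b => ⟨⟨min a b, mem_Ioi.2 (lt_min a.2 b.2)⟩, hS (min_le_left _ _), hS (min_le_right _ _)⟩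
  exact ⟨ε, hε, by simpa using hSε⟩

section NearBadPairs

variable {X Y M : Type*} [MetricSpace X] [MetricSpace Y] [MetricSpace M]

/-- For `r = 1 / m` and `ε = 0` these are exactly the pairs of continua witnessing
`¬ MemBf f m y g`; a positive `ε` relaxes the fibre `f⁻¹(y) ∩ g⁻¹(z)` containing them. -/
def nearBadPairs (f : X → Y) (g : X → M) (y : Y) (r ε : ℝ) :
    Set (NonemptyCompacts X × NonemptyCompacts X) :=
  {P | IsPreconnected (P.1 : Set X) ∧ IsPreconnected (P.2 : Set X) ∧
    ¬Disjoint (P.1 : Set X) P.2 ∧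
    (P.1 : Set X) ⊆ f ⁻¹' closedBall y ε ∧ (P.2 : Set X) ⊆ f ⁻¹' closedBall y ε ∧
    (P.1 : Set X) ×ˢ (P.2 : Set X) ⊆ {w | dist (g w.1) (g w.2) ≤ ε} ∧
    ¬(P.1 : Set X) ⊆ thickening r P.2 ∧ ¬(P.2 : Set X) ⊆ thickening r P.1}

theorem monotone_nearBadPairs (f : X → Y) (g : X → M) (y : Y) (r : ℝ) :
    Monotone (nearBadPairs f g y r) := by
  intro ε ε' hε P ⟨hc₁, hc₂, hmeet, hf₁, hf₂, hg, hfar⟩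
  refine ⟨hc₁, hc₂, hmeet, hf₁.trans ?_, hf₂.trans ?_,
    hg.trans fun w (hw : _ ≤ ε) => hw.trans hε, hfar⟩ <;>
  exact preimage_mono (closedBall_subset_closedBall hε)

theorem isClosed_nearBadPairs {f : X → Y} {g : X → M} (hf : Continuous f) (hg : Continuous g)
    (y : Y) (r ε : ℝ) : IsClosed (nearBadPairs f g y r ε) := by
  have hfib : IsClosed {K : NonemptyCompacts X | (K : Set X) ⊆ f ⁻¹' closedBall y ε} :=
    NonemptyCompacts.isClosed_subsets_of_isClosed (isClosed_closedBall.preimage hf)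
  have hosc : IsClosed {P : NonemptyCompacts X × NonemptyCompacts X |
      (P.1 : Set X) ×ˢ (P.2 : Set X) ⊆ {w | dist (g w.1) (g w.2) ≤ ε}} :=
    (NonemptyCompacts.isClosed_subsets_of_isClosed (isClosed_le (by fun_prop)
      continuous_const)).preimage NonemptyCompacts.continuous_prod
  have hfar := (NonemptyCompacts.isOpen_setOf_subset_thickening (X := X) r).isClosed_compl
  simp only [nearBadPairs, ofPred_and]
  exact (NonemptyCompacts.isClosed_setOf_isPreconnected.preimage continuous_fst).inter <|
    (NonemptyCompacts.isClosed_setOf_isPreconnected.preimage continuous_snd).inter <|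
    NonemptyCompacts.isOpen_setOfPred_disjoint_coe.isClosed_compl.inter <|
    (hfib.preimage continuous_fst).inter <| (hfib.preimage continuous_snd).inter <| hosc.inter <|
    hfar.inter (hfar.preimage continuous_swap)

theorem iInter_nearBadPairs_eq_empty {f : X → Y} {m : ℕ} {y : Y} {g : X → M}
    (hmem : MemBf f m y g) : ⋂ ε > 0, nearBadPairs f g y (1 / m) ε = ∅ := by
  refine eq_empty_iff_forall_notMem.2 fun P hP => ?_
  simp only [mem_iInter] at hP
  obtain ⟨hc₁, hc₂, hmeet, -, -, -, hfar₁, hfar₂⟩ := hP 1 one_pos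
  obtain ⟨x, hx₁, hx₂⟩ := not_disjoint_iff.1 hmeet
  have hfib : ∀ w ∈ (P.1 : Set X) ∪ P.2, f w = y := fun w hw =>
    eq_of_forall_dist_le fun ε hε => by
      obtain ⟨-, -, -, hf₁, hf₂, -⟩ := hP ε hε
      exact hw.elim (@hf₁ w) (@hf₂ w)
  have hg : ∀ w ∈ (P.1 : Set X), ∀ w' ∈ (P.2 : Set X), g w = g w' := fun w hw w' hw' =>
    eq_of_forall_dist_le fun ε hε => by
      obtain ⟨-, -, -, -, -, hosc, -⟩ := hP ε hε
      exact hosc (mk_mem_prod hw hw')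
  rcases hmem (g x) P.1 P.2 (fun w hw => ⟨hfib w (.inl hw), hg w hw x hx₂⟩)
    (fun w hw => ⟨hfib w (.inr hw), (hg x hx₁ w hw).symm⟩) P.1.isCompact ⟨P.1.nonempty, hc₁⟩
    P.2.isCompact ⟨P.2.nonempty, hc₂⟩ ⟨x, hx₁, hx₂⟩ with h | h
  exacts [hfar₁ h, hfar₂ h]

theorem nonempty_nearBadPairs_of_not_memBf {f : X → Y} {g g' : X → M} {m : ℕ} {y y' : Y}
    {ε : ℝ} (hy : dist y' y ≤ ε) (hg' : ∀ x ∈ f ⁻¹' {y'}, dist (g' x) (g x) ≤ ε / 2)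
    (h : ¬MemBf f m y' g') : (nearBadPairs f g y (1 / m) ε).Nonempty := by
  simp only [MemBf, not_forall, not_or] at h
  obtain ⟨z, K₀, K₁, h₀, h₁, hK₀, hcK₀, hK₁, hcK₁, hmeet, hfar₀, hfar₁⟩ := h
  have hfib : ∀ w ∈ K₀ ∪ K₁, f w = y' ∧ g' w = z := fun w hw => hw.elim (h₀ ·) (h₁ ·)
  refine ⟨(⟨⟨K₀, hK₀⟩, hcK₀.nonempty⟩, ⟨⟨K₁, hK₁⟩, hcK₁.nonempty⟩), hcK₀.isPreconnected,
    hcK₁.isPreconnected, not_disjoint_iff_nonempty_inter.2 hmeet,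
    fun w hw => ?_, fun w hw => ?_, ?_, hfar₀, hfar₁⟩
  · simpa [(hfib w (.inl hw)).1] using hy
  · simpa [(hfib w (.inr hw)).1] using hy
  · rintro ⟨w, w'⟩ ⟨hw, hw'⟩
    have hgw := hg' w (hfib w (.inl hw)).1
    have hgw' := hg' w' (hfib w' (.inr hw')).1
    rw [(hfib w (.inl hw)).2] at hgw
    rw [(hfib w' (.inr hw')).2] at hgw'
    calc dist (g w) (g w') ≤ dist z (g w) + dist z (g w') := dist_triangle_left _ _ _
      _ ≤ ε / 2 + ε / 2 := add_le_add hgw hgw'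
      _ = ε := add_halves ε

end NearBadPairs

theorem memBf_stable_general {X Y M : Type*} [MetricSpace X] [CompactSpace X]
    [MetricSpace Y] [MetricSpace M]
    (f : X → Y) (hf : Continuous f)
    (m : ℕ) (y : Y) (g : X → M) (hg : Continuous g)
    (hmem : MemBf f m y g) :
    ∃ V ∈ 𝓝 y, ∃ δ > (0 : ℝ), ∀ y' ∈ V, ∀ g' : X → M, Continuous g' →
      (∀ x ∈ f ⁻¹' {y'}, dist (g' x) (g x) < δ) → MemBf f m y' g' := by
  obtain ⟨ε, hε, hempty⟩ := CompactSpace.exists_pos_eq_empty_of_iInter_eq_empty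
    (monotone_nearBadPairs f g y _) (isClosed_nearBadPairs hf hg y _)
    (iInter_nearBadPairs_eq_empty hmem)
  refine ⟨closedBall y ε, closedBall_mem_nhds y hε, ε / 2, half_pos hε,
    fun y' hy' g' _ hg' => ?_⟩
  by_contra hbad
  exact (nonempty_nearBadPairs_of_not_memBf hy' (fun x hx => (hg' x hx).le) hbad).ne_empty hempty

/-- Claim 2 of the paper: membership in `𝓑_f(m,y)` is stable under small perturbations
of `g` over fibers of nearby points. -/
theorem memBf_stable {X Y M : Type*} [MetricSpace X] [CompactSpace X]
    [MetricSpace Y] [CompactSpace Y] [MetricSpace M]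
    (f : X → Y) (hf : Continuous f) (hcl : IsClosedMap f)
    (hsurj : Function.Surjective f) (hfib : ∀ y', IsCompact (f ⁻¹' {y'}))
    (m : ℕ) (hm : 1 ≤ m) (y : Y) (g : X → M) (hg : Continuous g)
    (hmem : MemBf f m y g) :
    ∃ V ∈ 𝓝 y, ∃ δ > (0 : ℝ), ∀ y' ∈ V, ∀ g' : X → M, Continuous g' →
      (∀ x ∈ f ⁻¹' {y'}, dist (g' x) (g x) < δ) → MemBf f m y' g' :=
  memBf_stable_general f hf m y g hg hmem
end

section
/- For every metric space Y there exists a zero-dimensional F_σ subset C of Y × [0,1] such that C ∩ ({y} × [0,1]) ≠ ∅ for every y ∈ Y. -/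
open Set Metric Topology Filter

/-!
For every `n` take a locally finite closed cover `G n` of `Y` by sets of diameter `< 1 / (n + 1)`
that splits into countably many levels `G n m`, each consisting of pairwise disjoint sets
(Stone's theorem). Embed the Cantor space `ℕ → Bool` into `[0, 1]` by `e`, and let row `n` of a
sequence `b` (the bits `b (Nat.pair n j)`) encode the level `m` if it starts with exactly `m`
entries `true`. The set `C` of pairs `(y, e b)` such that for every `n` the point `y` lies in a
cell of `G n` of the level encoded by row `n` of `b` is closed, and it meets every fibre since
the levels of cells containing a given `y` can be prescribed independently in all rows. On `C`
the cell of `G n` containing a point and the bits of `b` are locally constant, and agreement of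
finitely many of them confines a point to a small neighbourhood; these clopen partitions are
nested, which makes `C` zero-dimensional.
-/

open Function PiNat

theorem isLocallyConstant_of_mem_locallyFinite {X ι : Type*} [TopologicalSpace X]
    {R : ι → Set X} (hR : LocallyFinite R) (hclosed : ∀ i, IsClosed (R i))
    (hdisj : Pairwise (Disjoint on R)) {f : X → ι} (hf : ∀ x, x ∈ R (f x)) :
    IsLocallyConstant f := by
  intro u
  have : f ⁻¹' u = (⋃ i : {i // i ∉ u}, R i)ᶜ := by
    ext x
    simp only [mem_preimage, mem_compl_iff, mem_iUnion, not_exists]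
    refine ⟨fun hx i hi => ?_, fun h => by_contra fun hx => h ⟨f x, hx⟩ (hf x)⟩
    exact disjoint_left.1 (hdisj fun h : f x = i => i.2 (h ▸ hx)) (hf x) hi
  rw [this, isOpen_compl_iff]
  exact (hR.comp_injective Subtype.val_injective).isClosed_iUnion fun i => hclosed i

theorem isOpen_preimage_cylinder {X : Type*} [TopologicalSpace X] {E : ℕ → Type*}
    {c : X → ∀ k, E k} (hc : ∀ k, IsLocallyConstant fun x => c x k) (a : ∀ k, E k) (n : ℕ) :
    IsOpen (c ⁻¹' cylinder a n) := by
  have : c ⁻¹' cylinder a n = ⋂ k ∈ Finset.range n, (fun x => c x k) ⁻¹' {a k} := by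
    ext; simp [cylinder]
  rw [this]
  exact isOpen_biInter_finset fun k _ => (hc k).isOpen_fiber _

theorem dimLE0_of_isLocallyConstant_cylinders {X : Type*} [TopologicalSpace X] {E : ℕ → Type*}
    (c : X → ∀ k, E k) (hc : ∀ k, IsLocallyConstant fun x => c x k)
    (hbasis : ∀ x, ∀ U ∈ 𝓝 x, ∃ n, c ⁻¹' cylinder (c x) n ⊆ U) : DimLE0 X := by
  intro 𝒰 hopen hcover
  have hfine : ∀ x, ∃ n, ∃ U ∈ 𝒰, c ⁻¹' cylinder (c x) n ⊆ U := fun x => by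
    obtain ⟨U, hU, hxU⟩ := mem_sUnion.1 (hcover ▸ mem_univ x)
    obtain ⟨n, hn⟩ := hbasis x U ((hopen U hU).mem_nhds hxU)
    exact ⟨n, U, hU, hn⟩
  classical
  set N := fun x => Nat.find (hfine x)
  -- The cylinder of `x'` of length `N x` is fine enough, so `N x' ≤ N x`.
  have key : ∀ x x' z, N x ≤ N x' → c z ∈ cylinder (c x) (N x) → c z ∈ cylinder (c x') (N x') →
      cylinder (c x') (N x') = cylinder (c x) (N x) := by
    intro x x' z hle hz hz'
    have hx' : c x' ∈ cylinder (c x) (N x) := by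
      rw [← mem_cylinder_iff_eq.1 hz]
      exact cylinder_anti _ hle (mem_cylinder_iff_eq.1 hz' ▸ self_mem_cylinder _ _)
    have hge : N x' ≤ N x := Nat.find_min' _ <| by
      obtain ⟨U, hU, hsub⟩ := Nat.find_spec (hfine x)
      exact ⟨U, hU, by rwa [mem_cylinder_iff_eq.1 hx']⟩
    rw [← mem_cylinder_iff_eq.1 hz, ← mem_cylinder_iff_eq.1 hz', le_antisymm hle hge]
  refine ⟨range fun x => c ⁻¹' cylinder (c x) (N x), ?_, ?_, ?_, ?_⟩
  · rintro _ ⟨x, rfl⟩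
    exact isOpen_preimage_cylinder hc _ _
  · exact sUnion_eq_univ_iff.2 fun x => ⟨_, mem_range_self x, self_mem_cylinder _ _⟩
  · rintro _ ⟨x, rfl⟩ _ ⟨x', rfl⟩ hne
    refine disjoint_left.2 fun z hz hz' => hne ?_
    rcases le_total (N x) (N x') with h | h
    · exact congrArg _ (key x x' z h hz hz').symm
    · exact congrArg _ (key x' x z h hz' hz)
  · rintro _ ⟨x, rfl⟩
    exact Nat.find_spec (hfine x)

theorem PiNat.exists_cylinder_subset_of_mem_nhds {E : ℕ → Type*} [∀ n, TopologicalSpace (E n)]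
    [∀ n, DiscreteTopology (E n)] {a : ∀ n, E n} {U : Set (∀ n, E n)} (hU : U ∈ 𝓝 a) :
    ∃ N, cylinder a N ⊆ U := by
  obtain ⟨_, ⟨x, N, rfl⟩, ha, hsub⟩ := (isTopologicalBasis_cylinders E).mem_nhds_iff.1 hU
  exact ⟨N, mem_cylinder_iff_eq.1 ha ▸ hsub⟩

structure IsSigmaDiscreteClosedCover {X ι : Type*} [TopologicalSpace X] (G : ℕ → ι → Set X) :
    Prop where
  isClosed : ∀ m i, IsClosed (G m i)
  exists_mem : ∀ x, ∃ m i, x ∈ G m i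
  disjoint : ∀ m, Pairwise (Disjoint on G m)
  locallyFinite : LocallyFinite fun p : ℕ × ι => G p.1 p.2

section Stone

variable {X : Type*} [PseudoMetricSpace X] {ι : Type*} [LinearOrder ι]

/-- The cells of M. E. Rudin's proof of Stone's theorem that metric spaces are paracompact. -/
def stoneCell (s : ι → Set X) : ℕ → ι → Set X
  | n, i => ⋃ (x : X) (_ : ∀ j < i, x ∉ s j) (_ : ball x (3 * 2⁻¹ ^ n) ⊆ s i)
      (_ : ∀ m < n, ∀ j, x ∉ stoneCell s m j), ball x (2⁻¹ ^ n)

variable {s : ι → Set X}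

theorem mem_stoneCell {n : ℕ} {i : ι} {y : X} :
    y ∈ stoneCell s n i ↔ ∃ x, (∀ j < i, x ∉ s j) ∧ ball x (3 * 2⁻¹ ^ n) ⊆ s i ∧
      (∀ m < n, ∀ j, x ∉ stoneCell s m j) ∧ dist y x < 2⁻¹ ^ n := by
  rw [stoneCell]
  simp only [mem_iUnion, mem_ball, exists_prop]

theorem isOpen_stoneCell (n : ℕ) (i : ι) : IsOpen (stoneCell s n i) := by
  rw [stoneCell]
  exact isOpen_iUnion fun _ => isOpen_iUnion fun _ => isOpen_iUnion fun _ =>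
    isOpen_iUnion fun _ => isOpen_ball

theorem stoneCell_subset (n : ℕ) (i : ι) : stoneCell s n i ⊆ s i := by
  intro y hy
  obtain ⟨x, -, hball, -, hyx⟩ := mem_stoneCell.1 hy
  exact hball (mem_ball.2 (hyx.trans_le (by linarith [pow_pos (by norm_num : (0:ℝ) < 2⁻¹) n])))

theorem le_dist_of_mem_stoneCell {n : ℕ} {i j : ι} (hij : i ≠ j) {y z : X}
    (hy : y ∈ stoneCell s n i) (hz : z ∈ stoneCell s n j) : 2⁻¹ ^ n ≤ dist y z := by
  wlog hlt : i < j generalizing i j y z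
  · rw [dist_comm]; exact this hij.symm hz hy (lt_of_le_of_ne (not_lt.1 hlt) hij.symm)
  obtain ⟨x, -, hxball, -, hyx⟩ := mem_stoneCell.1 hy
  obtain ⟨x', hx'min, -, -, hzx'⟩ := mem_stoneCell.1 hz
  -- The center `x'` avoids `s i`, which contains the ball of radius `3 * 2⁻¹ ^ n` about `x`.
  have hfar : 3 * 2⁻¹ ^ n ≤ dist x' x := not_lt.1 fun h => hx'min i hlt (hxball (mem_ball.2 h))
  linarith [dist_triangle4 x' z y x, dist_comm x' z, dist_comm z y]

theorem disjoint_stoneCell_ball {n k m : ℕ} {i j : ι} {x : X}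
    (hx : ball x (2⁻¹ ^ k) ⊆ stoneCell s n i) (hm : n + k < m) :
    Disjoint (stoneCell s m j) (ball x (2⁻¹ ^ (n + k + 1))) := by
  refine disjoint_left.2 fun y hy hyx => ?_
  obtain ⟨z, -, -, hz, hyz⟩ := mem_stoneCell.1 hy
  refine hz n (by omega) i (hx (mem_ball.2 ?_))
  have h1 : (2⁻¹ : ℝ) ^ m ≤ 2⁻¹ ^ (k + 1) :=
    pow_le_pow_of_le_one (by norm_num) (by norm_num) (by omega)
  have h2 : (2⁻¹ : ℝ) ^ (n + k + 1) ≤ 2⁻¹ ^ (k + 1) :=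
    pow_le_pow_of_le_one (by norm_num) (by norm_num) (by omega)
  have h3 : (2⁻¹ : ℝ) ^ (k + 1) * 2 = 2⁻¹ ^ k := by rw [pow_succ]; ring
  linarith [dist_triangle z y x, dist_comm z y, mem_ball.1 hyx]

theorem subsingleton_stoneCell_inter_ball (m : ℕ) (x : X) :
    {j | (stoneCell s m j ∩ ball x (2⁻¹ ^ (m + 1))).Nonempty}.Subsingleton := by
  rintro j ⟨y, hy, hyx⟩ j' ⟨z, hz, hzx⟩
  by_contra hne
  have h : (2⁻¹ : ℝ) ^ (m + 1) * 2 = 2⁻¹ ^ m := by rw [pow_succ]; ring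
  linarith [le_dist_of_mem_stoneCell hne hy hz, dist_triangle_right y z x, mem_ball.1 hyx,
    mem_ball.1 hzx]

theorem disjoint_closure_stoneCell {n : ℕ} {i j : ι} (hij : i ≠ j) :
    Disjoint (closure (stoneCell s n i)) (closure (stoneCell s n j)) := by
  have hsep : closure (stoneCell s n i) ×ˢ closure (stoneCell s n j) ⊆
      {p : X × X | 2⁻¹ ^ n ≤ dist p.1 p.2} := by
    rw [← closure_prod_eq]
    exact closure_minimal (fun p hp => le_dist_of_mem_stoneCell hij hp.1 hp.2)
      (isClosed_le continuous_const continuous_dist)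
  refine disjoint_left.2 fun x hi hj => ?_
  have := hsep (show (x, x) ∈ _ from ⟨hi, hj⟩)
  simp only [mem_ofPred_eq, dist_self] at this
  exact this.not_gt (by positivity)

variable [WellFoundedLT ι]

theorem exists_mem_stoneCell (hs : ∀ i, IsOpen (s i)) (hcov : ⋃ i, s i = univ) (x : X) :
    ∃ n i, x ∈ stoneCell s n i := by
  have hx : ∃ i, x ∈ s i := mem_iUnion.1 (hcov ▸ mem_univ x)
  set i := wellFounded_lt.min {i | x ∈ s i} hx
  obtain ⟨r, hr, hball⟩ := isOpen_iff.1 (hs i) x (wellFounded_lt.min_mem _ hx)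
  obtain ⟨n, hn⟩ := exists_pow_lt_of_lt_one (div_pos hr three_pos) (by norm_num : (2⁻¹:ℝ) < 1)
  by_contra! h
  refine h n i (mem_stoneCell.2 ⟨x, fun j hj hxj => ?_, ?_, fun m _ j => h m j, by simp⟩)
  · exact wellFounded_lt.not_lt_min {i | x ∈ s i} hxj hj
  · exact (ball_subset_ball (by linarith)).trans hball

theorem locallyFinite_stoneCell (hs : ∀ i, IsOpen (s i)) (hcov : ⋃ i, s i = univ) :
    LocallyFinite fun p : ℕ × ι => stoneCell s p.1 p.2 := by
  intro x
  obtain ⟨n, i, hx⟩ := exists_mem_stoneCell hs hcov x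
  obtain ⟨r, hr, hball⟩ := isOpen_iff.1 (isOpen_stoneCell n i) x hx
  obtain ⟨k, hk⟩ := exists_pow_lt_of_lt_one hr (by norm_num : (2⁻¹ : ℝ) < 1)
  have hxk : ball x (2⁻¹ ^ k) ⊆ stoneCell s n i := (ball_subset_ball hk.le).trans hball
  refine ⟨ball x (2⁻¹ ^ (n + k + 1)), ball_mem_nhds _ (by positivity), ?_⟩
  refine ((finite_Iic (n + k)).biUnion fun m _ =>
    (finite_singleton m).prod (subsingleton_stoneCell_inter_ball (s := s) m x).finite).subset ?_
  rintro ⟨m, j⟩ hmj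
  have hm : m ≤ n + k := not_lt.1 fun h => hmj.ne_empty (disjoint_stoneCell_ball hxk h).inter_eq
  refine mem_biUnion (x := m) hm ⟨rfl, hmj.mono (inter_subset_inter_right _ (ball_subset_ball ?_))⟩
  exact pow_le_pow_of_le_one (by norm_num) (by norm_num) (by omega)

end Stone

theorem exists_isSigmaDiscreteClosedCover_subset_closure {X ι : Type*} [PseudoMetricSpace X]
    {s : ι → Set X} (hs : ∀ i, IsOpen (s i)) (hcov : ⋃ i, s i = univ) :
    ∃ G : ℕ → ι → Set X, IsSigmaDiscreteClosedCover G ∧ ∀ m i, G m i ⊆ closure (s i) := by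
  obtain ⟨_, _⟩ := exists_wellFoundedLT ι
  refine ⟨fun m i => closure (stoneCell s m i), ⟨fun _ _ => isClosed_closure, fun x => ?_,
    fun m i j hij => disjoint_closure_stoneCell hij, (locallyFinite_stoneCell hs hcov).closure⟩,
    fun m i => closure_mono (stoneCell_subset m i)⟩
  obtain ⟨m, i, hx⟩ := exists_mem_stoneCell hs hcov x
  exact ⟨m, i, subset_closure hx⟩

theorem exists_isSigmaDiscreteClosedCover_dist_lt {X : Type*} [PseudoMetricSpace X] {ε : ℝ}
    (hε : 0 < ε) : ∃ G : ℕ → X → Set X, IsSigmaDiscreteClosedCover G ∧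
      ∀ m a, ∀ y ∈ G m a, ∀ y' ∈ G m a, dist y y' < ε := by
  obtain ⟨G, hG, hsub⟩ := exists_isSigmaDiscreteClosedCover_subset_closure
    (s := fun a : X => ball a (ε / 3)) (fun _ => isOpen_ball)
    (iUnion_eq_univ_iff.2 fun x => ⟨x, mem_ball_self (by positivity)⟩)
  refine ⟨G, hG, fun m a y hy y' hy' => ?_⟩
  have hy := mem_closedBall.1 (closure_ball_subset_closedBall (hsub m a hy))
  have hy' := mem_closedBall.1 (closure_ball_subset_closedBall (hsub m a hy'))
  linarith [dist_triangle_right y y' a]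

theorem exists_continuous_injective_cantor_unitInterval :
    ∃ e : (ℕ → Bool) → unitInterval, Continuous e ∧ Injective e := by
  obtain ⟨f, hrange, hcont, hinj⟩ := isClosed_Icc.exists_nat_bool_injection_of_not_countable
    (by simp : ¬ (Icc (0 : ℝ) 1).Countable)
  exact ⟨codRestrict f _ (fun b => hrange (mem_range_self b)), hcont.codRestrict _,
    hinj.codRestrict _⟩

def rowLevelSet (n m : ℕ) : Set (ℕ → Bool) :=
  {b | (∀ j < m, b (Nat.pair n j) = true) ∧ b (Nat.pair n m) = false}

theorem isClosed_rowLevelSet (n m : ℕ) : IsClosed (rowLevelSet n m) := by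
  simp only [rowLevelSet, ofPred_and, ofPred_forall]
  exact (isClosed_iInter fun j => isClosed_iInter fun _ =>
    isClosed_eq (continuous_apply _) continuous_const).inter
    (isClosed_eq (continuous_apply _) continuous_const)

theorem disjoint_rowLevelSet (n : ℕ) {m m' : ℕ} (h : m ≠ m') :
    Disjoint (rowLevelSet n m) (rowLevelSet n m') := by
  wlog hlt : m < m' generalizing m m'
  · exact (this h.symm (lt_of_le_of_ne (not_lt.1 hlt) h.symm)).symm
  refine disjoint_left.2 fun b hb hb' => ?_
  simpa [hb.2] using hb'.1 m hlt

theorem exists_forall_mem_rowLevelSet (m : ℕ → ℕ) : ∃ b, ∀ n, b ∈ rowLevelSet n (m n) :=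
  ⟨fun k => decide (k.unpair.2 < m k.unpair.1), fun n => by simp [rowLevelSet]⟩

section CantorCell

variable {Y T : Type*}

def cantorCell (G : ℕ → ℕ → Y → Set Y) (e : (ℕ → Bool) → T) (n : ℕ) (p : ℕ × Y) : Set (Y × T) :=
  G n p.1 p.2 ×ˢ (e '' rowLevelSet n p.1)

def cantorCellSet (G : ℕ → ℕ → Y → Set Y) (e : (ℕ → Bool) → T) : Set (Y × T) :=
  ⋂ n, ⋃ p, cantorCell G e n p

variable {G : ℕ → ℕ → Y → Set Y} {e : (ℕ → Bool) → T}

theorem exists_mem_cantorCellSet [TopologicalSpace Y]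
    (hG : ∀ n, IsSigmaDiscreteClosedCover (G n)) (y : Y) : ∃ b, (y, e b) ∈ cantorCellSet G e := by
  choose m a hy using fun n => (hG n).exists_mem y
  obtain ⟨b, hb⟩ := exists_forall_mem_rowLevelSet m
  exact ⟨b, mem_iInter.2 fun n => mem_iUnion.2 ⟨(m n, a n), hy n, b, hb n, rfl⟩⟩

theorem pairwise_disjoint_cantorCell [TopologicalSpace Y] {n : ℕ}
    (hG : IsSigmaDiscreteClosedCover (G n)) (he : Injective e) :
    Pairwise (Disjoint on cantorCell G e n) := by
  rintro ⟨m, a⟩ ⟨m', a'⟩ hne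
  refine disjoint_prod.2 ?_
  by_cases hm : m = m'
  · subst hm
    exact .inl (hG.disjoint m fun h => hne (Prod.ext rfl h))
  · exact .inr ((disjoint_image_iff he).2 (disjoint_rowLevelSet n hm))

section TopologicalSpace

variable [TopologicalSpace Y] [TopologicalSpace T] {n : ℕ}

theorem isClosed_cantorCell [T2Space T] (hG : IsSigmaDiscreteClosedCover (G n)) (he : Continuous e)
    (p : ℕ × Y) : IsClosed (cantorCell G e n p) :=
  (hG.isClosed _ _).prod ((isClosed_rowLevelSet n p.1).isCompact.image he).isClosed

theorem locallyFinite_cantorCell (hG : IsSigmaDiscreteClosedCover (G n)) :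
    LocallyFinite (cantorCell G e n) :=
  hG.locallyFinite.prod_right _

theorem isClosed_cantorCellSet [T2Space T] (hG : ∀ n, IsSigmaDiscreteClosedCover (G n))
    (he : Continuous e) : IsClosed (cantorCellSet G e) :=
  isClosed_iInter fun n =>
    (locallyFinite_cantorCell (hG n)).isClosed_iUnion (isClosed_cantorCell (hG n) he)

end TopologicalSpace

theorem dimLE0_cantorCellSet [PseudoMetricSpace Y] [TopologicalSpace T] [T2Space T]
    (hG : ∀ n, IsSigmaDiscreteClosedCover (G n))
    (hmesh : ∀ ε > 0, ∃ n, ∀ m a, ∀ y ∈ G n m a, ∀ y' ∈ G n m a, dist y y' < ε)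
    (he : Continuous e) (he' : Injective e) : DimLE0 (cantorCellSet G e) := by
  choose cell hcell using fun (x : cantorCellSet G e) n => mem_iUnion.1 (mem_iInter.1 x.2 n)
  choose dec hdec using fun x => (hcell x 0).2.imp fun _ h => h.2
  have hdec_cont : Continuous dec := (he.isClosedEmbedding he').isEmbedding.continuous_iff.2 <| by
    simpa only [comp_def, hdec] using continuous_snd.comp continuous_subtype_val
  refine dimLE0_of_isLocallyConstant_cylinders (fun x k => (cell x k, dec x k)) (fun k => ?_)
    fun x U hU => ?_
  · refine IsLocallyConstant.prodMk ?_ ((IsLocallyConstant.iff_continuous _).2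
      ((continuous_apply k).comp hdec_cont))
    exact isLocallyConstant_of_mem_locallyFinite
      ((locallyFinite_cantorCell (hG k)).preimage_continuous continuous_subtype_val)
      (fun p => (isClosed_cantorCell (hG k) he p).preimage continuous_subtype_val)
      (fun p q h => ((pairwise_disjoint_cantorCell (hG k) he' h).preimage _)) (fun x => hcell x k)
  · obtain ⟨V, hV, hVU⟩ := (mem_nhds_subtype _ _ _).1 hU
    obtain ⟨V₁, hV₁, V₂, hV₂, hV⟩ := mem_nhds_prod_iff.1 hV
    obtain ⟨ε, hε, hball⟩ := Metric.mem_nhds_iff.1 hV₁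
    obtain ⟨k, hk⟩ := hmesh ε hε
    obtain ⟨N, hN⟩ := exists_cylinder_subset_of_mem_nhds
      (he.continuousAt.preimage_mem_nhds ((hdec x).symm ▸ hV₂ : V₂ ∈ 𝓝 (e (dec x))))
    refine ⟨max (k + 1) N, fun z hz => hVU (hV ⟨hball ?_, ?_⟩)⟩
    · have hzx : cell z k = cell x k := congrArg Prod.fst (hz k (by omega))
      exact hk _ _ _ (hcell z k).1 _ (hzx ▸ (hcell x k).1)
    · rw [← hdec z]
      exact hN fun i hi => congrArg Prod.snd (hz i (by omega))

end CantorCell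

/-- For every metric space `Y` there is a zero-dimensional `F_σ` subset of `Y × [0,1]`
meeting every vertical fiber. -/
theorem exists_zero_dim_Fsigma_meeting_fibers (Y : Type*) [MetricSpace Y] :
    ∃ C : Set (Y × unitInterval), DimLE0 ↥C ∧
      (∃ F : ℕ → Set (Y × unitInterval), (∀ i, IsClosed (F i)) ∧ C = ⋃ i, F i) ∧
      ∀ y : Y, ∃ t : unitInterval, (y, t) ∈ C := by
  choose G hG hdiam using fun n : ℕ =>
    exists_isSigmaDiscreteClosedCover_dist_lt (X := Y) (Nat.one_div_pos_of_nat (n := n))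
  have hmesh : ∀ ε > 0, ∃ n, ∀ m a, ∀ y ∈ G n m a, ∀ y' ∈ G n m a, dist y y' < ε := fun ε hε =>
    (exists_nat_one_div_lt hε).imp fun n hn m a y hy y' hy' => (hdiam n m a y hy y' hy').trans hn
  obtain ⟨e, he, he'⟩ := exists_continuous_injective_cantor_unitInterval
  refine ⟨cantorCellSet G e, dimLE0_cantorCellSet hG hmesh he he',
    ⟨fun _ => cantorCellSet G e, fun _ => isClosed_cantorCellSet hG he, (iUnion_const _).symm⟩,
    fun y => ?_⟩
  obtain ⟨b, hb⟩ := exists_mem_cantorCellSet hG y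
  exact ⟨e b, hb⟩
end

section
/- Let f : X → Y be a perfect map between metric spaces, define f̃ : X × [0,1] → Y by f̃(x,t) = f(x), and let g : X × [0,1] → [0,1] be a continuous map such that the restriction of g to f̃⁻¹(y) = f⁻¹(y) × [0,1] is a Bing map for every y ∈ Y. Then for every (y,t) ∈ Y × [0,1], the fiber (f̃ △ g)⁻¹(y,t) = g⁻¹(t) ∩ (f⁻¹(y) × [0,1]) projects to f⁻¹(y) by a map with zero-dimensional fibers. -/
open Set Metric Topology Filter

/-!
A subcontinuum of the slice over `x` lies in `{x} × [0,1]`, so it is a point or a segment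
`{x} × [a,b]`. A nondegenerate segment is the union of the proper subcontinua `{x} × [a,m]` and
`{x} × [m,b]`, which the Bing property forbids. Hence the slice is compact and totally
disconnected, and such a space has covering dimension zero: a finite clopen refinement of an open
cover can be made pairwise disjoint.
-/

theorem dimLE0_of_totallyDisconnectedSpace (Z : Type*) [TopologicalSpace Z] [CompactSpace Z]
    [T2Space Z] [TotallyDisconnectedSpace Z] : DimLE0 Z := by
  intro 𝒰 h𝒰 hcover
  have hU := TopologicalSpace.IsOpenCover.of_sets (v := fun U : 𝒰 => (U : Set Z))
    (fun U => h𝒰 U U.2) (by rwa [← sUnion_eq_iUnion])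
  obtain ⟨n, W, hWU, hWcover, hWdisj⟩ := hU.exists_finite_nonempty_disjoint_clopen_cover
  refine ⟨range fun j => (W j : Set Z), ?_, ?_, ?_, ?_⟩
  · rintro _ ⟨j, rfl⟩
    exact (W j).isOpen
  · rw [sUnion_range]
    exact univ_subset_iff.mp hWcover
  · exact (hWdisj.mono fun i j h => TopologicalSpace.Clopens.coe_disjoint.2 h).range_pairwise
  · rintro _ ⟨j, rfl⟩
    obtain ⟨⟨U, hU⟩, hjU⟩ := (hWU j).2
    exact ⟨U, hU, hjU⟩

theorem isTotallyDisconnected_of_forall_subsingleton {X : Type*} [TopologicalSpace X] [T2Space X]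
    {S : Set X} (hS : IsCompact S)
    (h : ∀ K ⊆ S, IsCompact K → IsConnected K → K.Subsingleton) : IsTotallyDisconnected S := by
  intro T hTS hT p hp q hq
  have hclS : closure T ⊆ S := hS.isClosed.closure_subset_iff.2 hTS
  exact h _ hclS (hS.of_isClosed_subset isClosed_closure hclS) ⟨⟨p, subset_closure hp⟩, hT.closure⟩
    (subset_closure hp) (subset_closure hq)

theorem IsIndecomposable.of_image {X Y : Type*} [TopologicalSpace X] [TopologicalSpace Y]
    {f : X → Y} (hf : Continuous f) (hinj : Function.Injective f) {K : Set X}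
    (h : IsIndecomposable (f '' K)) : IsIndecomposable K := by
  intro A B hA hB hAc hAconn hBc hBconn hAB
  refine (h (f '' A) (f '' B) (image_mono hA) (image_mono hB) (hAc.image hf)
    (hAconn.image f hf.continuousOn) (hBc.image hf) (hBconn.image f hf.continuousOn)
    (by rw [← image_union, hAB])).imp (hinj.image_injective ·) (hinj.image_injective ·)

section Order

variable {α : Type*} [ConditionallyCompleteLinearOrder α] [TopologicalSpace α] [OrderTopology α]
  [DenselyOrdered α]

theorem not_isIndecomposable_Icc {a b : α} (hab : a < b) : ¬ IsIndecomposable (Icc a b) := by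
  intro h
  obtain ⟨m, ham, hmb⟩ := exists_between hab
  rcases h (Icc a m) (Icc m b) (Icc_subset_Icc_right hmb.le) (Icc_subset_Icc_left ham.le)
    isCompact_Icc (isConnected_Icc ham.le) isCompact_Icc (isConnected_Icc hmb.le)
    (Icc_union_Icc_eq_Icc ham.le hmb.le) with h | h
  · exact hmb.not_ge (h ▸ right_mem_Icc.2 hab.le).2
  · exact ham.not_ge (h ▸ left_mem_Icc.2 hab.le).1

theorem IsIndecomposable.subsingleton {K : Set α} (hK : IsCompact K) (hc : IsConnected K)
    (h : IsIndecomposable K) : K.Subsingleton := by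
  intro p hp q hq
  by_contra hpq
  obtain ⟨a, ha, haK⟩ := hK.exists_isLeast hc.nonempty
  obtain ⟨b, hb, hbK⟩ := hK.exists_isGreatest hc.nonempty
  have hK_eq : K = Icc a b :=
    Subset.antisymm (fun k hk => ⟨haK hk, hbK hk⟩) (hc.isPreconnected.Icc_subset ha hb)
  have hab : a < b := by
    rcases lt_or_gt_of_ne hpq with h | h
    exacts [(haK hp).trans_lt (h.trans_le (hbK hq)), (haK hq).trans_lt (h.trans_le (hbK hp))]
  exact not_isIndecomposable_Icc hab (hK_eq ▸ h)

theorem IsBing.subsingleton_of_subset_vertical {X : Type*} [TopologicalSpace X]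
    {Z K : Set (X × α)} {x : X} (hZ : IsBing Z) (hKZ : K ⊆ Z) (hKx : K ⊆ {x} ×ˢ univ)
    (hK : IsCompact K) (hc : IsConnected K) : K.Subsingleton := by
  have hK_eq : Prod.mk x '' (Prod.snd '' K) = K := by
    rw [image_image]
    exact EqOn.image_eq_self fun p hp => Prod.ext (hKx hp).1.symm rfl
  have hInd : IsIndecomposable (Prod.snd '' K) :=
    (hK_eq ▸ hZ K hKZ hK hc).of_image (Continuous.prodMk_right x) (Prod.mk_right_injective x)
  exact hK_eq ▸ (hInd.subsingleton (hK.image continuous_snd)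
    (hc.image _ continuous_snd.continuousOn)).image _

end Order

theorem bing_fibers_project_zero_dimensional_general {X Y : Type*} [MetricSpace X]
    (f : X → Y)
    (g : X × unitInterval → unitInterval) (hg : Continuous g)
    (hBing : ∀ (y : Y) (t : unitInterval),
      IsBing ((fun p : X × unitInterval => f p.1) ⁻¹' {y} ∩ g ⁻¹' {t})) :
    ∀ (y : Y) (t : unitInterval), ∀ x ∈ f ⁻¹' {y},
      DimLE0 ↥{p : X × unitInterval | f p.1 = y ∧ g p = t ∧ p.1 = x} := by
  intro y t x hx
  set S := {p : X × unitInterval | f p.1 = y ∧ g p = t ∧ p.1 = x}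
  have hS_eq : S = {x} ×ˢ univ ∩ g ⁻¹' {t} := by
    ext ⟨x', s⟩
    constructor
    · rintro ⟨-, hgt, rfl⟩
      exact ⟨⟨rfl, trivial⟩, hgt⟩
    · rintro ⟨⟨rfl, -⟩, hgt⟩
      exact ⟨hx, hgt, rfl⟩
  have hS : IsCompact S := hS_eq ▸
    (isCompact_singleton.prod isCompact_univ).inter_right (isClosed_singleton.preimage hg)
  have : CompactSpace S := isCompact_iff_compactSpace.mp hS
  have : TotallyDisconnectedSpace S := totallyDisconnectedSpace_subtype_iff.2 <|
    isTotallyDisconnected_of_forall_subsingleton hS fun K hKS =>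
      (hBing y t).subsingleton_of_subset_vertical (fun p hp => ⟨(hKS hp).1, (hKS hp).2.1⟩)
        fun p hp => ⟨(hKS hp).2.2, trivial⟩
  exact dimLE0_of_totallyDisconnectedSpace S

/-- If `g : X × [0,1] → [0,1]` restricts to a Bing map on each `f⁻¹(y) × [0,1]`, then each
fiber of `f̃ △ g` projects to `f⁻¹(y)` with zero-dimensional fibers. -/
theorem bing_fibers_project_zero_dimensional {X Y : Type*} [MetricSpace X] [MetricSpace Y]
    (f : X → Y) (hf : Continuous f) (hcl : IsClosedMap f)
    (hfib : ∀ y, IsCompact (f ⁻¹' {y}))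
    (g : X × unitInterval → unitInterval) (hg : Continuous g)
    (hBing : ∀ (y : Y) (t : unitInterval),
      IsBing ((fun p : X × unitInterval => f p.1) ⁻¹' {y} ∩ g ⁻¹' {t})) :
    ∀ (y : Y) (t : unitInterval), ∀ x ∈ f ⁻¹' {y},
      DimLE0 ↥{p : X × unitInterval | f p.1 = y ∧ g p = t ∧ p.1 = x} :=
  bing_fibers_project_zero_dimensional_general f g hg hBing
end
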